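/- Let s ≥ 2 and k ≥ 3 be integers and let ∑_{i∈W} a_i x_i + a^0 ∑_{i∉W} x_i ≥ (s+1)a^0 be a facet defining (s+1)-inequality of Q(C_{sk}^k). Then: (1) |x^i ∩ W| = 1 for every i ∈ Z_{sk}, and |W| = k; (2) a_i = 2a^0 for every i ∈ W. Consequently the inequality equals a^0 times the inequality 2∑_{i∈W} x_i + ∑_{i∉W} x_i ≥ s+1. -/

import Mathlib

/-- `Cseg n k i` is the set `C^i = {i, i+1, …, i+k−1} ⊆ ℤ_n`. -/
def Cseg (n k : ℕ) (i : ZMod n) : Finset (ZMod n) :=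
  (Finset.range k).image fun h : ℕ => i + (h : ZMod n)

/-- A cover of the circulant matrix `C_n^k`. -/
def IsCover (n k : ℕ) (x : Finset (ZMod n)) : Prop :=
  ∀ i : ZMod n, (x ∩ Cseg n k i).Nonempty

/-- A minimal cover of `C_n^k`. -/
def IsMinimalCover (n k : ℕ) (x : Finset (ZMod n)) : Prop :=
  IsCover n k x ∧ ∀ y : Finset (ZMod n), y ⊂ x → ¬ IsCover n k y

/-- The covering number `τ(C_n^k)`. -/
noncomputable def coveringNumber (n k : ℕ) : ℕ :=
  sInf {m : ℕ | ∃ x : Finset (ZMod n), IsCover n k x ∧ x.card = m}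

/-- A minimum cover of `C_n^k`. -/
noncomputable def IsMinimumCover (n k : ℕ) (x : Finset (ZMod n)) : Prop :=
  IsCover n k x ∧ x.card = coveringNumber n k

/-- `xcov n k i` is the cover `x^i = {i + h·k : 0 ≤ h ≤ ⌈n/k⌉ − 1}`. -/
def xcov (n k : ℕ) (i : ZMod n) : Finset (ZMod n) :=
  (Finset.range ((n + k - 1) / k)).image fun h : ℕ => i + ((h * k : ℕ) : ZMod n)

/-- The cyclic closed interval `[a,b]_n` of `ℤ_n`. -/
def cycInterval (n : ℕ) (a b : ZMod n) : Finset (ZMod n) :=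
  (Finset.range ((b - a).val + 1)).image fun h : ℕ => a + (h : ZMod n)

/-- The inequality `a·x ≥ α` is valid for `Q(C_n^k)`. -/
def IsValid (n k : ℕ) (a : ZMod n → ℤ) (α : ℤ) : Prop :=
  ∀ x : Finset (ZMod n), IsCover n k x → α ≤ ∑ i ∈ x, a i

/-- A root of a valid inequality: a cover satisfying it with equality. -/
def IsRoot (n k : ℕ) (a : ZMod n → ℤ) (α : ℤ) (x : Finset (ZMod n)) : Prop :=
  IsCover n k x ∧ ∑ i ∈ x, a i = α

/-- Characteristic vector of a subset of `ℤ_n`. -/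
noncomputable def charVec (n : ℕ) (x : Finset (ZMod n)) : ZMod n → ℝ :=
  fun i => if i ∈ x then 1 else 0

/-- `a·x ≥ α` is facet defining for `Q(C_n^k)`: it is valid, and the characteristic
vectors of its roots affinely span an `(n−1)`-dimensional affine subspace of `ℝ^n`. -/
def IsFacet (n k : ℕ) (a : ZMod n → ℤ) (α : ℤ) : Prop :=
  IsValid n k a α ∧
    Module.finrank ℝ
      (affineSpan ℝ
        {v : ZMod n → ℝ | ∃ x : Finset (ZMod n), IsRoot n k a α x ∧ v = charVec n x}).direction
      = n - 1

/-- `a·x ≥ α` is a positive multiple of one of the boolean inequalities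
`x_i ≥ 0`, `−x_i ≥ −1`, `∑_{j ∈ C^i} x_j ≥ 1`. -/
def IsBooleanMultiple (n k : ℕ) (a : ZMod n → ℤ) (α : ℤ) : Prop :=
  ∃ c : ℤ, 0 < c ∧
    ( (∃ i : ZMod n, (∀ j, a j = if j = i then c else 0) ∧ α = 0)
    ∨ (∃ i : ZMod n, (∀ j, a j = if j = i then -c else 0) ∧ α = -c)
    ∨ (∃ i : ZMod n, (∀ j, a j = if j ∈ Cseg n k i then c else 0) ∧ α = c) )

/-- `a·x ≥ α` is a positive multiple of the rank constraint `∑ x_i ≥ ⌈n/k⌉`. -/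
def IsRankMultiple (n k : ℕ) (a : ZMod n → ℤ) (α : ℤ) : Prop :=
  ∃ c : ℤ, 0 < c ∧ (∀ j, a j = c) ∧ α = c * (((n + k - 1) / k : ℕ) : ℤ)

/-!
A cover of `C_{sk}^k` meets each of the `s` disjoint windows `C^b, C^{b+k}, …`, so it has at least
`s` elements. A cover with exactly `s` elements has one element per window for every base point
`b`, so no two of its elements are closer than `k`; as the window `C^{z+1}` must meet it, it is
closed under `z ↦ z + k`, i.e. it is the cover `x^w` through any of its points `w`.

Since `a_i > a^0` on `W`, a root meeting `W` has at most `s` elements, so it is `x^w` for every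
`w ∈ W` it contains. If for some `w ∈ W` the cover `x^w` were not a root, or contained a second
point `w' ∈ W`, every root would satisfy the extra equation `x_w = 0`, resp. `x_w = x_{w'}`, and
the roots would span too small an affine subspace. Validity makes each `x^i` meet `W`, hence in
exactly one point `w`, and `x^w` being a root then reads `s a^0 + (a_w - a^0) = (s + 1) a^0`.
-/

open Finset

section LinearAlgebra

variable {K V : Type*} [Field K] [AddCommGroup V] [Module K V]

theorem LinearMap.prod_surjective_of_triangular {f g : V →ₗ[K] K} {u v : V}
    (hfu : f u ≠ 0) (hgu : g u = 0) (hgv : g v ≠ 0) : Function.Surjective (f.prod g) := by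
  rintro ⟨p, q⟩
  refine ⟨(q / g v) • v + ((p - q / g v * f v) / f u) • u, Prod.ext ?_ ?_⟩
  · change f _ = p
    simp only [map_add, map_smul, smul_eq_mul]
    field_simp
    ring
  · change g _ = q
    simp only [map_add, map_smul, smul_eq_mul, hgu, mul_zero, add_zero]
    field_simp

theorem finrank_direction_affineSpan_add_two_le [FiniteDimensional K V] {S : Set V}
    {f g : V →ₗ[K] K} {γ δ : K} (hf : ∀ v ∈ S, f v = γ) (hg : ∀ v ∈ S, g v = δ)
    (hfg : Function.Surjective (f.prod g)) :
    Module.finrank K (affineSpan K S).direction + 2 ≤ Module.finrank K V := by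
  have hker : (affineSpan K S).direction ≤ LinearMap.ker (f.prod g) := by
    rw [direction_affineSpan, vectorSpan_def, Submodule.span_le]
    rintro _ ⟨v, hv, w, hw, rfl⟩
    simp [hf v hv, hf w hw, hg v hv, hg w hw]
  have hrank := (f.prod g).finrank_range_add_finrank_ker
  rw [LinearMap.range_eq_top.mpr hfg, finrank_top, Module.finrank_prod, Module.finrank_self]
    at hrank
  have := Submodule.finrank_mono hker
  omega

end LinearAlgebra

theorem IsFacet.exists_isRoot_ne {n k : ℕ} [NeZero n] {c : ZMod n → ℤ} {α : ℤ}
    (hF : IsFacet n k c α) (g : (ZMod n → ℝ) →ₗ[ℝ] ℝ) (δ : ℝ) {j : ZMod n}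
    (hj : c j ≠ 0) (hgj : g (Pi.single j 1) = 0) {v : ZMod n → ℝ} (hv : g v ≠ 0) :
    ∃ x, IsRoot n k c α x ∧ g (charVec n x) ≠ δ := by
  by_contra! hroots
  set f := Fintype.linearCombination ℝ fun i => (c i : ℝ)
  have hfx : ∀ x, f (charVec n x) = ∑ i ∈ x, c i := by
    intro x
    simp [f, Fintype.linearCombination_apply, charVec, sum_ite_mem]
  have hsurj : Function.Surjective (f.prod g) :=
    LinearMap.prod_surjective_of_triangular (u := Pi.single j 1) (by simpa [f] using hj) hgj hv
  have := finrank_direction_affineSpan_add_two_le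
    (S := {v | ∃ x, IsRoot n k c α x ∧ v = charVec n x}) (γ := (α : ℝ)) (δ := δ)
    ?_ ?_ hsurj
  · rw [hF.2, Module.finrank_fintype_fun_eq_card, ZMod.card] at this
    omega
  · rintro _ ⟨x, hx, rfl⟩
    rw [hfx]
    exact_mod_cast hx.2
  · rintro _ ⟨x, hx, rfl⟩
    exact hroots x hx

section Covers

variable {s k : ℕ} [NeZero k] {x : Finset (ZMod (s * k))}

theorem IsCover.exists_mem_sub_val_div_eq (hx : IsCover (s * k) k x) (b : ZMod (s * k))
    {t : ℕ} (ht : t < s) : ∃ y ∈ x, (y - b).val / k = t := by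
  obtain ⟨y, hy⟩ := hx (b + (t * k : ℕ))
  simp only [mem_inter, Cseg, mem_image, mem_range] at hy
  obtain ⟨hyx, h, hh, rfl⟩ := hy
  have hlt : h + t * k < s * k := by nlinarith
  refine ⟨_, hyx, ?_⟩
  rw [show b + ((t * k : ℕ) : ZMod (s * k)) + h - b = ((h + t * k : ℕ) : ZMod (s * k)) by
      push_cast; ring,
    ZMod.val_natCast_of_lt hlt, Nat.add_mul_div_right _ _ (Nat.pos_of_neZero k),
    Nat.div_eq_of_lt hh, zero_add]

theorem IsCover.card_ge (hx : IsCover (s * k) k x) : s ≤ x.card := by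
  simpa using card_le_card_of_surjOn (s := x) (t := range s) (fun y => (y - 0).val / k)
    fun t ht => hx.exists_mem_sub_val_div_eq 0 (mem_range.1 ht)

theorem xcov_eq_image (i : ZMod (s * k)) :
    xcov (s * k) k i = (range s).image fun t => i + ((t * k : ℕ) : ZMod (s * k)) := by
  have hk := Nat.pos_of_neZero k
  rw [xcov, Nat.div_eq_of_lt_le (k := s) (n := k) (by omega) (by rw [add_mul, one_mul]; omega)]

variable [NeZero s]

def residue (s k : ℕ) : ZMod (s * k) →+* ZMod k :=
  ZMod.castHom (dvd_mul_left k s) (ZMod k)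

theorem residue_apply (z : ZMod (s * k)) : residue s k z = (z.val : ZMod k) := by
  rw [residue, ZMod.castHom_apply, ZMod.cast_eq_val]

theorem mem_xcov_iff {i z : ZMod (s * k)} :
    z ∈ xcov (s * k) k i ↔ residue s k z = residue s k i := by
  rw [xcov_eq_image, mem_image]
  constructor
  · rintro ⟨t, -, rfl⟩
    simp
  · intro h
    obtain ⟨t, ht⟩ : k ∣ (z - i).val := by
      rw [← ZMod.natCast_eq_zero_iff, ← residue_apply, map_sub, h, sub_self]
    refine ⟨t, mem_range.2 ?_, ?_⟩
    · have := ZMod.val_lt (z - i)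
      rw [ht] at this
      nlinarith
    · rw [show t * k = (z - i).val by rw [ht, mul_comm], ZMod.natCast_zmod_val]
      ring

theorem mem_xcov_self (i : ZMod (s * k)) : i ∈ xcov (s * k) k i :=
  mem_xcov_iff.2 rfl

theorem xcov_eq_of_mem {i w : ZMod (s * k)} (hw : w ∈ xcov (s * k) k i) :
    xcov (s * k) k w = xcov (s * k) k i := by
  ext z
  rw [mem_xcov_iff, mem_xcov_iff, mem_xcov_iff.1 hw]

theorem isCover_xcov (i : ZMod (s * k)) : IsCover (s * k) k (xcov (s * k) k i) := by
  intro m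
  refine ⟨m + ((residue s k (i - m)).val : ZMod (s * k)), mem_inter.2 ⟨?_, ?_⟩⟩
  · rw [mem_xcov_iff, map_add, map_natCast, ZMod.natCast_zmod_val, map_sub]
    ring
  · exact mem_image.2 ⟨_, mem_range.2 (ZMod.val_lt _), rfl⟩

theorem card_xcov (i : ZMod (s * k)) : (xcov (s * k) k i).card = s := by
  refine le_antisymm ?_ (isCover_xcov i).card_ge
  rw [xcov_eq_image]
  exact card_image_le.trans (card_range s).le

theorem IsCover.eq_of_sub_val_lt (hx : IsCover (s * k) k x) (hcard : x.card = s)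
    {y z : ZMod (s * k)} (hy : y ∈ x) (hz : z ∈ x) (hyz : (y - z).val < k) : y = z := by
  have hinj := injOn_of_surjOn_of_card_le (s := x) (t := range s) (fun y => (y - z).val / k)
    (fun y _ => mem_range.2 (Nat.div_lt_of_lt_mul ((ZMod.val_lt _).trans_eq (mul_comm s k))))
    (fun t ht => hx.exists_mem_sub_val_div_eq z (mem_range.1 ht)) (by simp [hcard])
  exact hinj hy hz (by simp [Nat.div_eq_of_lt hyz])

theorem IsCover.add_mem (hx : IsCover (s * k) k x) (hcard : x.card = s) {z : ZMod (s * k)}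
    (hz : z ∈ x) : z + (k : ZMod (s * k)) ∈ x := by
  obtain ⟨y, hy⟩ := hx (z + 1)
  simp only [mem_inter, Cseg, mem_image, mem_range] at hy
  obtain ⟨hyx, h, hh, rfl⟩ := hy
  obtain rfl | hlt : h = k - 1 ∨ h + 1 < k := by omega
  · convert hyx using 1
    rw [Nat.cast_sub (Nat.one_le_of_lt hh)]
    ring
  · have hsk : h + 1 < s * k := hlt.trans_le (Nat.le_mul_of_pos_left k (Nat.pos_of_neZero s))
    have hyz : z + 1 + h - z = ((h + 1 : ℕ) : ZMod (s * k)) := by push_cast; ring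
    have := hx.eq_of_sub_val_lt hcard hyx hz (by rwa [hyz, ZMod.val_natCast_of_lt hsk])
    rw [this, sub_self, eq_comm, ZMod.natCast_eq_zero_iff] at hyz
    exact absurd (Nat.le_of_dvd (Nat.succ_pos h) hyz) (by omega)

theorem IsCover.eq_xcov (hx : IsCover (s * k) k x) (hcard : x.card = s) {w : ZMod (s * k)}
    (hw : w ∈ x) : x = xcov (s * k) k w := by
  have hmem : ∀ t : ℕ, w + ((t * k : ℕ) : ZMod (s * k)) ∈ x := by
    intro t
    induction t with
    | zero => simpa
    | succ t ih =>
      convert hx.add_mem hcard ih using 1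
      push_cast
      ring
  refine (eq_of_subset_of_card_le ?_ (by rw [hcard, card_xcov])).symm
  rw [xcov_eq_image]
  rintro _ hy
  obtain ⟨t, -, rfl⟩ := mem_image.1 hy
  exact hmem t

theorem card_eq_of_card_xcov_inter_eq_one {W : Finset (ZMod (s * k))}
    (hW : ∀ i, (xcov (s * k) k i ∩ W).card = 1) : W.card = k := by
  have hfiber (r : ZMod k) :
      {z ∈ W | residue s k z = r} = xcov (s * k) k (r.val : ZMod (s * k)) ∩ W := by
    ext z
    simp [mem_xcov_iff, and_comm]
  rw [card_eq_sum_card_fiberwise (f := residue s k) (t := univ) fun _ _ => mem_coe.2 (mem_univ _)]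
  simp [hfiber, hW]

end Covers

theorem sum_eq_mul_card_add_sum_inter {ι : Type*} [DecidableEq ι] {W : Finset ι} {c : ι → ℤ}
    {a0 : ℤ} (hWc : ∀ i ∉ W, c i = a0) (x : Finset ι) :
    ∑ i ∈ x, c i = a0 * x.card + ∑ i ∈ x ∩ W, (c i - a0) := by
  rw [sum_subset inter_subset_left fun i hi hni => by
    rw [hWc i fun h => hni (mem_inter.2 ⟨hi, h⟩), sub_self], sum_sub_distrib, sum_const,
    nsmul_eq_mul]
  ring

section SPlusOneInequality

variable {s k : ℕ} [NeZero s] [NeZero k] {W : Finset (ZMod (s * k))} {c : ZMod (s * k) → ℤ}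
  {a0 : ℤ}

theorem xcov_inter_nonempty (ha0 : 0 < a0) (hWc : ∀ i ∉ W, c i = a0)
    (hv : IsValid (s * k) k c (((s : ℤ) + 1) * a0)) (i : ZMod (s * k)) :
    (xcov (s * k) k i ∩ W).Nonempty := by
  rw [nonempty_iff_ne_empty]
  intro hempty
  have := hv _ (isCover_xcov i)
  rw [sum_eq_mul_card_add_sum_inter hWc, hempty, sum_empty, card_xcov] at this
  linarith

theorem IsRoot.eq_xcov (ha0 : 0 < a0) (hW : ∀ i ∈ W, a0 < c i) (hWc : ∀ i ∉ W, c i = a0)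
    {x : Finset (ZMod (s * k))} (hx : IsRoot (s * k) k c (((s : ℤ) + 1) * a0) x)
    {w : ZMod (s * k)} (hwx : w ∈ x) (hwW : w ∈ W) : x = xcov (s * k) k w := by
  have hpos : 0 < ∑ i ∈ x ∩ W, (c i - a0) :=
    sum_pos (fun i hi => sub_pos.2 (hW i (mem_inter.1 hi).2)) ⟨w, mem_inter.2 ⟨hwx, hwW⟩⟩
  have hsum := hx.2
  rw [sum_eq_mul_card_add_sum_inter hWc] at hsum
  have hlt : (x.card : ℤ) < s + 1 := lt_of_mul_lt_mul_left (by linarith) ha0.le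
  exact hx.1.eq_xcov (le_antisymm (by omega) hx.1.card_ge) hwx

theorem isRoot_xcov (hF : IsFacet (s * k) k c (((s : ℤ) + 1) * a0)) (ha0 : 0 < a0)
    (hW : ∀ i ∈ W, a0 < c i) (hWc : ∀ i ∉ W, c i = a0) {j : ZMod (s * k)} (hj : j ∉ W)
    {w : ZMod (s * k)} (hw : w ∈ W) :
    IsRoot (s * k) k c (((s : ℤ) + 1) * a0) (xcov (s * k) k w) := by
  have hjw : j ≠ w := by rintro rfl; exact hj hw
  obtain ⟨x, hx, hxw⟩ := hF.exists_isRoot_ne (LinearMap.proj w) 0 (j := j)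
    (by rw [hWc j hj]; exact ha0.ne') (by simp [hjw]) (v := Pi.single w 1) (by simp)
  have hwx : w ∈ x := by
    by_contra h
    simp [charVec, h] at hxw
  rwa [← hx.eq_xcov ha0 hW hWc hwx hw]

theorem xcov_inter_eq_singleton (hF : IsFacet (s * k) k c (((s : ℤ) + 1) * a0)) (ha0 : 0 < a0)
    (hW : ∀ i ∈ W, a0 < c i) (hWc : ∀ i ∉ W, c i = a0) {j : ZMod (s * k)} (hj : j ∉ W)
    {w : ZMod (s * k)} (hw : w ∈ W) : xcov (s * k) k w ∩ W = {w} := by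
  refine eq_singleton_iff_unique_mem.2 ⟨mem_inter.2 ⟨mem_xcov_self w, hw⟩, fun w' hw' => ?_⟩
  by_contra hne
  obtain ⟨hw'x, hw'W⟩ := mem_inter.1 hw'
  have hjw : j ≠ w := by rintro rfl; exact hj hw
  have hjw' : j ≠ w' := by rintro rfl; exact hj hw'W
  obtain ⟨x, hx, hdiff⟩ := hF.exists_isRoot_ne
    ((LinearMap.proj w : (ZMod (s * k) → ℝ) →ₗ[ℝ] ℝ) - LinearMap.proj w') 0 (j := j)
    (by rw [hWc j hj]; exact ha0.ne') (by simp [hjw, hjw']) (v := Pi.single w 1)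
    (by simp [hne])
  have hiff : w ∈ x ↔ w' ∈ x := by
    constructor
    · intro h
      rw [hx.eq_xcov ha0 hW hWc h hw]
      exact hw'x
    · intro h
      rw [hx.eq_xcov ha0 hW hWc h hw'W, xcov_eq_of_mem hw'x]
      exact mem_xcov_self w
  simp [charVec, hiff] at hdiff

theorem eq_two_mul_of_mem (hF : IsFacet (s * k) k c (((s : ℤ) + 1) * a0)) (ha0 : 0 < a0)
    (hW : ∀ i ∈ W, a0 < c i) (hWc : ∀ i ∉ W, c i = a0) {j : ZMod (s * k)} (hj : j ∉ W)
    {w : ZMod (s * k)} (hw : w ∈ W) : c w = 2 * a0 := by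
  have hroot := (isRoot_xcov hF ha0 hW hWc hj hw).2
  rw [sum_eq_mul_card_add_sum_inter hWc, xcov_inter_eq_singleton hF ha0 hW hWc hj hw,
    sum_singleton, card_xcov] at hroot
  linarith

end SPlusOneInequality

theorem stmt7_general (s k : ℕ) (hs : 2 ≤ s) (hk : 3 ≤ k)
    (W : Finset (ZMod (s * k))) (hWproper : ∃ i : ZMod (s * k), i ∉ W)
    (a : ZMod (s * k) → ℤ) (a0 : ℤ) (ha0 : 1 ≤ a0)
    (ha : ∀ i ∈ W, a0 + 1 ≤ a i ∧ a i ≤ 2 * a0)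
    (hfacet : IsFacet (s * k) k (fun i => if i ∈ W then a i else a0) (((s : ℤ) + 1) * a0)) :
    (∀ i : ZMod (s * k), (xcov (s * k) k i ∩ W).card = 1) ∧
    W.card = k ∧
    (∀ i ∈ W, a i = 2 * a0) ∧
    (∀ i : ZMod (s * k), (if i ∈ W then a i else a0) = a0 * (if i ∈ W then 2 else 1)) := by
  have : NeZero s := ⟨by omega⟩
  have : NeZero k := ⟨by omega⟩
  obtain ⟨j, hj⟩ := hWproper
  have ha0' : 0 < a0 := ha0
  have hW : ∀ i ∈ W, a0 < (fun i => if i ∈ W then a i else a0) i := fun i hi => by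
    simpa [hi] using (ha i hi).1
  have hWc : ∀ i ∉ W, (fun i => if i ∈ W then a i else a0) i = a0 := fun i hi => if_neg hi
  have hsingle : ∀ i, (xcov (s * k) k i ∩ W).card = 1 := by
    intro i
    obtain ⟨w, hw⟩ := xcov_inter_nonempty ha0' hWc hfacet.1 i
    rw [← xcov_eq_of_mem (mem_inter.1 hw).1,
      xcov_inter_eq_singleton hfacet ha0' hW hWc hj (mem_inter.1 hw).2, card_singleton]
  have htwo : ∀ i ∈ W, a i = 2 * a0 := fun i hi => by
    simpa [hi] using eq_two_mul_of_mem hfacet ha0' hW hWc hj hi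
  refine ⟨hsingle, card_eq_of_card_xcov_inter_eq_one hsingle, htwo, fun i => ?_⟩
  split_ifs with hi
  · rw [htwo i hi, mul_comm]
  · rw [mul_one]

theorem stmt7 (s k : ℕ) (hs : 2 ≤ s) (hk : 3 ≤ k)
    (W : Finset (ZMod (s * k))) (hWne : W.Nonempty) (hWproper : ∃ i : ZMod (s * k), i ∉ W)
    (a : ZMod (s * k) → ℤ) (a0 : ℤ) (ha0 : 1 ≤ a0)
    (ha : ∀ i ∈ W, a0 + 1 ≤ a i ∧ a i ≤ 2 * a0)
    (hfacet : IsFacet (s * k) k (fun i => if i ∈ W then a i else a0) (((s : ℤ) + 1) * a0)) :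
    (∀ i : ZMod (s * k), (xcov (s * k) k i ∩ W).card = 1) ∧
    W.card = k ∧
    (∀ i ∈ W, a i = 2 * a0) ∧
    (∀ i : ZMod (s * k), (if i ∈ W then a i else a0) = a0 * (if i ∈ W then 2 else 1)) :=
  stmt7_general s k hs hk W hWproper a a0 ha0 ha hfacet
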